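/- Let a ≥ 3 be an integer and p ∈ (0,1) with q = 1 − p, and let z, z' ∈ {1,…,a−1}. If there exists a real constant κ such that B_ν(z) = κ·A_ν(z') for all ν ∈ {1,…,a−1}, then z' = a − z and κ = (p/q)^{a−z}. In other words, the spectral duality relation with a mode-independent coefficient holds between sites z and z' only when they are geometrically symmetric about the midpoint of the interval. -/

import Mathlib

/-- Spectral coefficient `A_ν(w) = (2/a)·(q/p)^{w/2}·sin(πνw/a)·sin(πν/a)`,
with `q = 1 − p`. -/
noncomputable def Acoef (a : ℕ) (p : ℝ) (ν w : ℕ) : ℝ :=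
  (2 / a) * ((1 - p) / p) ^ ((w : ℝ) / 2) *
    Real.sin (Real.pi * ν * w / a) * Real.sin (Real.pi * ν / a)

/-- Spectral coefficient `B_ν(w) = (2/a)·(p/q)^{(a−w)/2}·sin(πν(a−w)/a)·sin(πν/a)`,
with `q = 1 − p`. -/
noncomputable def Bcoef (a : ℕ) (p : ℝ) (ν w : ℕ) : ℝ :=
  (2 / a) * (p / (1 - p)) ^ (((a : ℝ) - w) / 2) *
    Real.sin (Real.pi * ν * ((a : ℝ) - w) / a) * Real.sin (Real.pi * ν / a)

/-!
Put `r = p/q` and `w = a − z`. Dividing out the common factor `(2/a)·sin(πν/a)`, which is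
nonzero for `0 < ν < a`, the duality relation reads `r^{w/2}·sin(νx) = κ r^{-z'/2}·sin(νy)`
with `x = πw/a` and `y = πz'/a` in `(0, π)`. The modes `ν = 1, 2` (available since `a ≥ 3`)
give, after dividing the second equation by the first, `cos x = cos y`, hence `x = y`, i.e.
`z' = w`; the first equation then yields `κ = r^{w/2}·r^{z'/2} = r^w`.
-/

open Real

lemma pi_mul_div_mem_Ioo {k a : ℝ} (hk : 0 < k) (hka : k < a) : π * k / a ∈ Set.Ioo 0 π := by
  have ha : 0 < a := hk.trans hka
  refine ⟨by positivity, ?_⟩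
  rw [div_lt_iff₀ ha]
  exact mul_lt_mul_of_pos_left hka pi_pos

lemma eq_and_eq_of_mul_sin_eq_of_mul_sin_two_mul_eq {x y D E : ℝ}
    (hx : x ∈ Set.Ioo 0 π) (hy : y ∈ Set.Ioo 0 π) (hD : D ≠ 0)
    (h₁ : D * sin x = E * sin y) (h₂ : D * sin (2 * x) = E * sin (2 * y)) :
    x = y ∧ D = E := by
  have hsx : sin x ≠ 0 := (sin_pos_of_pos_of_lt_pi hx.1 hx.2).ne'
  have hcos : D * sin x * cos x = D * sin x * cos y := by
    rw [sin_two_mul, sin_two_mul] at h₂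
    linear_combination h₂ / 2 - cos y * h₁
  have hxy : x = y :=
    injOn_cos ⟨hx.1.le, hx.2.le⟩ ⟨hy.1.le, hy.2.le⟩ (mul_left_cancel₀ (mul_ne_zero hD hsx) hcos)
  subst hxy
  exact ⟨rfl, mul_right_cancel₀ hsx h₁⟩

lemma mul_sin_eq_of_Bcoef_eq_mul_Acoef {a ν z z' : ℕ} {p κ : ℝ} (hν : 0 < ν) (hνa : ν < a)
    (h : Bcoef a p ν z = κ * Acoef a p ν z') :
    (p / (1 - p)) ^ (((a : ℝ) - z) / 2) * sin (ν * (π * ((a : ℝ) - z) / a)) =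
      κ * ((1 - p) / p) ^ ((z' : ℝ) / 2) * sin (ν * (π * z' / a)) := by
  have hmode : sin (π * ν / a) ≠ 0 := by
    obtain ⟨h0, hπ⟩ := pi_mul_div_mem_Ioo (k := ν) (a := a) (by exact_mod_cast hν)
      (by exact_mod_cast hνa)
    exact (sin_pos_of_pos_of_lt_pi h0 hπ).ne'
  have ha : (a : ℝ) ≠ 0 := Nat.cast_ne_zero.2 (by omega)
  apply mul_left_cancel₀ (mul_ne_zero (div_ne_zero two_ne_zero ha) hmode)
  unfold Bcoef Acoef at h
  rw [show (ν : ℝ) * (π * (a - z) / a) = π * ν * (a - z) / a by ring,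
    show (ν : ℝ) * (π * z' / a) = π * ν * z' / a by ring]
  linear_combination h

/-- a mode-independent spectral duality relation
`B_ν(z) = κ·A_ν(z')` for all modes `ν` forces the geometric symmetry
`z' = a − z` and `κ = (p/q)^{a−z}`. -/
theorem stmt_9 (a : ℕ) (ha : 3 ≤ a) (p : ℝ) (hp : p ∈ Set.Ioo (0 : ℝ) 1)
    (z z' : ℕ) (hz : z ∈ Finset.Icc 1 (a - 1)) (hz' : z' ∈ Finset.Icc 1 (a - 1))
    (κ : ℝ)
    (hdual : ∀ ν ∈ Finset.Icc 1 (a - 1), Bcoef a p ν z = κ * Acoef a p ν z') :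
    z' = a - z ∧ κ = (p / (1 - p)) ^ ((a : ℝ) - z) := by
  obtain ⟨hp0, hp1⟩ := hp
  rw [Finset.mem_Icc] at hz hz'
  have hr : 0 < p / (1 - p) := div_pos hp0 (by linarith)
  have h₁ := mul_sin_eq_of_Bcoef_eq_mul_Acoef (ν := 1) (by omega) (by omega)
    (hdual 1 (Finset.mem_Icc.2 (by omega)))
  have h₂ := mul_sin_eq_of_Bcoef_eq_mul_Acoef (ν := 2) (by omega) (by omega)
    (hdual 2 (Finset.mem_Icc.2 (by omega)))
  simp only [Nat.cast_one, one_mul, Nat.cast_ofNat] at h₁ h₂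
  have hz₁ : (1 : ℝ) ≤ z := by exact_mod_cast hz.1
  have hzlt : (z : ℝ) < a := by exact_mod_cast (by omega : z < a)
  obtain ⟨hangle, hcoef⟩ := eq_and_eq_of_mul_sin_eq_of_mul_sin_two_mul_eq
    (pi_mul_div_mem_Ioo (by linarith) (by linarith))
    (pi_mul_div_mem_Ioo (by exact_mod_cast hz'.1) (by exact_mod_cast (by omega : z' < a)))
    (rpow_pos_of_pos hr _).ne' h₁ h₂
  have hsite : (z' : ℝ) = a - z := by
    field_simp [pi_ne_zero] at hangle
    linarith
  refine ⟨by rw [← Nat.cast_sub (by omega)] at hsite; exact_mod_cast hsite, ?_⟩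
  have hinv : ((1 - p) / p) ^ ((z' : ℝ) / 2) = ((p / (1 - p)) ^ (((a : ℝ) - z) / 2))⁻¹ := by
    rw [hsite, ← inv_div, inv_rpow hr.le]
  rw [hinv] at hcoef
  calc κ = (p / (1 - p)) ^ (((a : ℝ) - z) / 2) * (p / (1 - p)) ^ (((a : ℝ) - z) / 2) :=
        (mul_inv_eq_iff_eq_mul₀ (rpow_pos_of_pos hr _).ne').1 hcoef.symm
    _ = (p / (1 - p)) ^ ((a : ℝ) - z) := by rw [← rpow_add hr, add_halves]
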